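/- A real number x is a quadratic irrational if and only if its '−' continued fraction expansion (with partial quotients bᵢ ≥ 2 for i ≥ 1) is eventually periodic. -/

import Mathlib

/-- Iterates of the minus continued fraction algorithm. -/
noncomputable def mIter (x : ℝ) (n : ℕ) : ℝ := (fun y => ((⌈y⌉ : ℝ) - y)⁻¹)^[n] x

/-- The n-th partial quotient of the minus continued fraction of x. -/
noncomputable def mDigit (x : ℝ) (n : ℕ) : ℤ := ⌈mIter x n⌉

/-!
Write `w n = mIter x n` and `b n = mDigit x n`, so that `w (n + 1) = 1 / (b n - w n)` and,
for irrational `x`, `b n - 1 < w n < b n`. Two orbits of `y ↦ 1 / (b n - y)` that both stay in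
these digit intervals must coincide: their gap is divided at each step by a product of two numbers
in `(0, 1]` that is at most `1 - gap`, so a nonzero gap would grow past `1`.

If `x` is a root of `a X² + b X + c` with other root `x'`, transform the form along with `x`; its
roots are then `w n` and the orbit `s n` of `x'` under the same maps, and its discriminant `D` is
unchanged. By the uniqueness above `s n` cannot stay in the digit intervals, so eventually
`s n < 1 < w n`. Then the value `a_n (1 - w n) (1 - s n)` of the `n`-th form at `1` is a nonzero
integer, which with `D = a_n² (w n - s n)²` forces `4 |a_n| ≤ D`. As `c_(n+1) = a_n` and
`b_n² = D + 4 a_n c_n`, only finitely many forms remain, so two of them coincide, hence two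
complete quotients coincide and the digits are periodic.

Conversely, a rational `x` reaches an integer complete quotient (the denominators decrease), after
which a digit is `0`; so digits `≥ 2` force irrationality. A purely periodic `w = mIter w p` is
fixed by a composition of the maps `y ↦ 1 / (b - y)`, i.e. by an integral Möbius map whose lower
left entry is nonzero because the digits are `≥ 2`; so `w` is quadratic, and quadraticity passes
back from `mIter x N` to `x` one step at a time.
-/

open Set

def IsQuadratic (x : ℝ) : Prop :=
  ∃ a b c : ℤ, a ≠ 0 ∧ (a : ℝ) * x ^ 2 + (b : ℝ) * x + (c : ℝ) = 0

section Iterates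

variable {x : ℝ}

lemma mIter_zero (x : ℝ) : mIter x 0 = x := rfl

lemma mIter_succ (x : ℝ) (n : ℕ) : mIter x (n + 1) = ((mDigit x n : ℝ) - mIter x n)⁻¹ := by
  simp only [mIter, mDigit, Function.iterate_succ_apply']

lemma mIter_add (x : ℝ) (m n : ℕ) : mIter x (m + n) = mIter (mIter x m) n := by
  simp only [mIter, add_comm m n, Function.iterate_add_apply]

lemma mDigit_add (x : ℝ) (m n : ℕ) : mDigit x (m + n) = mDigit (mIter x m) n := by
  rw [mDigit, mDigit, mIter_add]

lemma irrational_mIter (hx : Irrational x) (n : ℕ) : Irrational (mIter x n) := by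
  induction n with
  | zero => exact hx
  | succ n ih => rw [mIter_succ]; exact (ih.intCast_sub _).inv

lemma mIter_mem_Ioo (hx : Irrational x) (n : ℕ) :
    mIter x n ∈ Ioo ((mDigit x n : ℝ) - 1) (mDigit x n) :=
  ⟨by rw [mDigit]; linarith [Int.ceil_lt_add_one (mIter x n)],
    (Int.le_ceil _).lt_of_ne ((irrational_mIter hx n).ne_int _)⟩

lemma one_lt_mIter (hx : Irrational x) {n : ℕ} (hn : 1 ≤ n) : 1 < mIter x n := by
  obtain ⟨m, rfl⟩ := Nat.exists_eq_add_of_le' hn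
  obtain ⟨h1, h2⟩ := mIter_mem_Ioo hx m
  rw [mIter_succ, one_lt_inv_iff₀]
  constructor <;> linarith

lemma two_le_mDigit (hx : Irrational x) {n : ℕ} (hn : 1 ≤ n) : 2 ≤ mDigit x n := by
  have : (1 : ℤ) < mDigit x n := Int.lt_ceil.2 (by exact_mod_cast one_lt_mIter hx hn)
  omega

lemma mDigit_periodic_of_mIter_eq {m p : ℕ} (h : mIter x m = mIter x (m + p)) :
    ∀ i, m ≤ i → mDigit x (i + p) = mDigit x i := by
  intro i hi
  obtain ⟨j, rfl⟩ := Nat.exists_eq_add_of_le hi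
  rw [show m + j + p = m + p + j by omega, mDigit_add x (m + p), mDigit_add x m, ← h]

end Iterates

lemma exists_lt_of_add_sq_le {e : ℕ → ℝ} (h0 : 0 < e 0) (hstep : ∀ k, e k + e k ^ 2 ≤ e (k + 1))
    (C : ℝ) : ∃ n, C < e n := by
  have hlin : ∀ n : ℕ, e 0 + n * e 0 ^ 2 ≤ e n := by
    intro n
    induction n with
    | zero => simp
    | succ n ih =>
      have hsq : e 0 ^ 2 ≤ e n ^ 2 := pow_le_pow_left₀ h0.le (by nlinarith) 2
      push_cast
      linarith [hstep n]
  obtain ⟨n, hn⟩ := exists_nat_gt ((C - e 0) / e 0 ^ 2)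
  rw [div_lt_iff₀ (by positivity)] at hn
  exact ⟨n, by linarith [hlin n]⟩

lemma eq_of_forall_mem_Ico {b : ℕ → ℤ} {y z : ℕ → ℝ}
    (hy : ∀ k, y (k + 1) = ((b k : ℝ) - y k)⁻¹) (hz : ∀ k, z (k + 1) = ((b k : ℝ) - z k)⁻¹)
    (hyb : ∀ k, y k ∈ Ico ((b k : ℝ) - 1) (b k)) (hzb : ∀ k, z k ∈ Ico ((b k : ℝ) - 1) (b k)) :
    y 0 = z 0 := by
  by_contra hne
  obtain ⟨e, he⟩ : ∃ e : ℕ → ℝ, ∀ k, e k = |y k - z k| := ⟨_, fun _ => rfl⟩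
  have he_lt : ∀ k, e k < 1 := fun k => by
    obtain ⟨h1, h2⟩ := hyb k
    obtain ⟨h3, h4⟩ := hzb k
    exact he k ▸ abs_sub_lt_iff.2 ⟨by linarith, by linarith⟩
  have hstep : ∀ k, e k + e k ^ 2 ≤ e (k + 1) := by
    intro k
    obtain ⟨h1, h2⟩ := hyb k
    obtain ⟨h3, h4⟩ := hzb k
    have hu : 0 < (b k : ℝ) - y k := by linarith
    have hv : 0 < (b k : ℝ) - z k := by linarith
    have hrec : e (k + 1) * (((b k : ℝ) - y k) * ((b k : ℝ) - z k)) = e k := by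
      rw [he, he, hy, hz, ← abs_of_pos (mul_pos hu hv), ← abs_mul]
      congr 1
      field_simp
      ring
    have huv : ((b k : ℝ) - y k) * ((b k : ℝ) - z k) ≤ 1 - e k := by
      rcases abs_cases (y k - z k) with ⟨h, -⟩ | ⟨h, -⟩ <;> rw [← he] at h <;> nlinarith
    have hek : 0 ≤ e k := he k ▸ abs_nonneg _
    have hek1 : 0 ≤ e (k + 1) := he (k + 1) ▸ abs_nonneg _
    nlinarith [mul_le_mul_of_nonneg_left huv hek1]
  obtain ⟨n, hn⟩ := exists_lt_of_add_sq_le (he 0 ▸ abs_pos.2 (sub_ne_zero.2 hne)) hstep 1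
  exact (he_lt n).not_gt hn

@[ext]
structure IntQuad where
  a : ℤ
  b : ℤ
  c : ℤ

namespace IntQuad

def disc (f : IntQuad) : ℤ := f.b ^ 2 - 4 * f.a * f.c

/-- The form `X² f(n - 1/X)`: its roots are the `(n - r)⁻¹` for the roots `r` of `f`. -/
def step (n : ℤ) (f : IntQuad) : IntQuad :=
  ⟨f.a * n ^ 2 + f.b * n + f.c, -(2 * f.a * n + f.b), f.a⟩

/-- Vieta's formulas: `f = f.a (X - w) (X - s)`. -/
def HasRoots (f : IntQuad) (w s : ℝ) : Prop :=
  (f.b : ℝ) = -f.a * (w + s) ∧ (f.c : ℝ) = f.a * w * s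

variable {f : IntQuad} {w s : ℝ}

lemma disc_step (n : ℤ) (f : IntQuad) : (step n f).disc = f.disc := by
  simp only [disc, step]
  ring

lemma hasRoots_of_eval_eq_zero (ha : f.a ≠ 0)
    (hw : (f.a : ℝ) * w ^ 2 + f.b * w + f.c = 0) : f.HasRoots w (-f.b / f.a - w) := by
  have hdiv : (f.a : ℝ) * (-f.b / f.a) = -f.b := mul_div_cancel₀ _ (Int.cast_ne_zero.2 ha)
  exact ⟨by linear_combination hdiv, by linear_combination hw - w * hdiv⟩

lemma HasRoots.irrational (h : f.HasRoots w s) (ha : f.a ≠ 0) (hw : Irrational w) :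
    Irrational s := by
  have ha' : (f.a : ℝ) ≠ 0 := Int.cast_ne_zero.2 ha
  have hs : s = ((-f.b / f.a : ℚ) : ℝ) - w := by
    push_cast
    rw [h.1]
    field_simp
    ring
  exact hs ▸ hw.ratCast_sub _

lemma HasRoots.ne (h : f.HasRoots w s) (ha : f.a ≠ 0) (hw : Irrational w) : w ≠ s := by
  rintro rfl
  have : (2 * f.a : ℤ) * w + f.b = 0 := by
    push_cast
    linear_combination h.1
  exact ((hw.intCast_mul (mul_ne_zero two_ne_zero ha)).add_intCast _).ne_zero this

lemma HasRoots.step (h : f.HasRoots w s) {n : ℤ} (hw : (n : ℝ) ≠ w) (hs : (n : ℝ) ≠ s) :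
    ((step n f).a : ℝ) = f.a * (n - w) * (n - s) ∧
      (step n f).HasRoots (n - w)⁻¹ (n - s)⁻¹ := by
  have hw' : (n : ℝ) - w ≠ 0 := sub_ne_zero.2 hw
  have hs' : (n : ℝ) - s ≠ 0 := sub_ne_zero.2 hs
  obtain ⟨hb, hc⟩ := h
  refine ⟨?_, ?_, ?_⟩ <;> simp only [IntQuad.step] <;> push_cast <;> rw [hb, hc]
  · ring
  · field_simp
    ring
  · field_simp
    ring

lemma HasRoots.disc_eq (h : f.HasRoots w s) : (f.disc : ℝ) = f.a ^ 2 * (w - s) ^ 2 := by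
  simp only [disc]
  push_cast
  rw [h.1, h.2]
  ring

lemma HasRoots.eq_or_eq {w' s' : ℝ} (h : f.HasRoots w s) (h' : f.HasRoots w' s')
    (ha : f.a ≠ 0) : w' = w ∨ w' = s := by
  have ha' : (f.a : ℝ) ≠ 0 := Int.cast_ne_zero.2 ha
  have : (f.a : ℝ) * ((w' - w) * (w' - s)) = 0 := by
    linear_combination h'.2 - h.2 + w' * (h'.1 - h.1)
  simpa [ha', sub_eq_zero] using this

lemma HasRoots.four_mul_abs_a_le_disc (h : f.HasRoots w s) (ha : f.a ≠ 0) (hw : 1 < w)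
    (hs : s < 1) : 4 * |f.a| ≤ f.disc := by
  have hval : ((f.a + f.b + f.c : ℤ) : ℝ) = f.a * ((w - 1) * (s - 1)) := by
    push_cast
    rw [h.1, h.2]
    ring
  have hval0 : f.a + f.b + f.c ≠ 0 := by
    intro h0
    rw [h0, Int.cast_zero, eq_comm] at hval
    exact mul_ne_zero (Int.cast_ne_zero.2 ha)
      (mul_ne_zero (by linarith) (by linarith)) hval
  have hone : (1 : ℝ) ≤ |(f.a : ℝ)| * ((w - 1) * (1 - s)) := by
    have : (1 : ℝ) ≤ |((f.a + f.b + f.c : ℤ) : ℝ)| := by exact_mod_cast Int.one_le_abs hval0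
    rwa [hval, abs_mul, abs_mul, abs_of_pos (by linarith : (0 : ℝ) < w - 1),
      abs_of_neg (by linarith : s - 1 < 0), neg_sub] at this
  have hamgm : 4 * ((w - 1) * (1 - s)) ≤ (w - s) ^ 2 := by nlinarith [sq_nonneg (w + s - 2)]
  have : (4 * |f.a| : ℝ) ≤ f.disc := by
    rw [h.disc_eq, ← sq_abs, Int.cast_abs]
    nlinarith [mul_le_mul_of_nonneg_left hamgm (sq_nonneg |(f.a : ℝ)|),
      mul_le_mul_of_nonneg_left hone (by positivity : (0 : ℝ) ≤ 4 * |(f.a : ℝ)|)]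
  exact_mod_cast this

lemma mem_Icc_of_four_mul_abs_le {D : ℤ} (hD : f.disc = D) (ha : 4 * |f.a| ≤ D)
    (hc : 4 * |f.c| ≤ D) :
    (f.a, f.b, f.c) ∈
      Icc (-(D + D ^ 2), -(D + D ^ 2), -(D + D ^ 2)) (D + D ^ 2, D + D ^ 2, D + D ^ 2) := by
  have hb : |f.b| ≤ D + D ^ 2 := by
    have hbsq : f.b ^ 2 = D + 4 * f.a * f.c := by rw [← hD, disc]; ring
    have hb_le : |f.b| ≤ f.b ^ 2 := by simpa using Int.natAbs_le_self_sq f.b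
    have hac : 16 * |f.a * f.c| ≤ D ^ 2 := by
      rw [abs_mul, sq]
      nlinarith [mul_le_mul ha hc (by positivity) (by linarith [abs_nonneg f.a])]
    nlinarith [le_abs_self (f.a * f.c), sq_nonneg D]
  have hD2 : 0 ≤ D ^ 2 := sq_nonneg D
  obtain ⟨ha1, ha2⟩ := abs_le.1 (by linarith [abs_nonneg f.a] : |f.a| ≤ D + D ^ 2)
  obtain ⟨hb1, hb2⟩ := abs_le.1 hb
  obtain ⟨hc1, hc2⟩ := abs_le.1 (by linarith [abs_nonneg f.c] : |f.c| ≤ D + D ^ 2)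
  exact ⟨⟨ha1, hb1, hc1⟩, ha2, hb2, hc2⟩

end IntQuad

noncomputable def minusOrbit (b : ℕ → ℤ) (y : ℝ) : ℕ → ℝ
  | 0 => y
  | n + 1 => ((b n : ℝ) - minusOrbit b y n)⁻¹

def formSeq (b : ℕ → ℤ) (f : IntQuad) : ℕ → IntQuad
  | 0 => f
  | n + 1 => (formSeq b f n).step (b n)

section Forward

variable {x x' : ℝ}

lemma disc_formSeq (b : ℕ → ℤ) (f : IntQuad) (n : ℕ) : (formSeq b f n).disc = f.disc := by
  induction n with
  | zero => rfl
  | succ n ih => rw [formSeq, IntQuad.disc_step, ih]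

lemma hasRoots_formSeq {f : IntQuad} (hx : Irrational x) (ha : f.a ≠ 0) (hf : f.HasRoots x x') :
    ∀ n, (formSeq (mDigit x) f n).a ≠ 0 ∧
      (formSeq (mDigit x) f n).HasRoots (mIter x n) (minusOrbit (mDigit x) x' n)
  | 0 => ⟨ha, hf⟩
  | n + 1 => by
    obtain ⟨ha', h⟩ := hasRoots_formSeq hx ha hf n
    have hw := irrational_mIter hx n
    have hs := h.irrational ha' hw
    obtain ⟨ha'', h'⟩ := h.step (hw.ne_int _).symm (hs.ne_int _).symm
    refine ⟨?_, by rw [mIter_succ]; exact h'⟩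
    have : ((formSeq (mDigit x) f (n + 1)).a : ℝ) ≠ 0 := by
      rw [formSeq, ha'']
      exact mul_ne_zero (mul_ne_zero (Int.cast_ne_zero.2 ha') (sub_ne_zero.2 (hw.ne_int _).symm))
        (sub_ne_zero.2 (hs.ne_int _).symm)
    exact_mod_cast this

lemma exists_minusOrbit_lt_one (hx : Irrational x) (hx' : x' ≠ x) :
    ∃ m, 1 ≤ m ∧ minusOrbit (mDigit x) x' m < 1 := by
  by_contra! h
  set s := minusOrbit (mDigit x) x'
  have hs : ∀ m, 1 ≤ m → s m ∈ Ico ((mDigit x m : ℝ) - 1) (mDigit x m) := by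
    intro m hm
    have h1 : 1 ≤ ((mDigit x m : ℝ) - s m)⁻¹ := h (m + 1) (by omega)
    have hpos : 0 < (mDigit x m : ℝ) - s m := inv_pos.1 (by linarith)
    have := (one_le_inv₀ hpos).1 h1
    constructor <;> linarith
  have h1 : mIter x 1 = s 1 :=
    eq_of_forall_mem_Ico (b := fun k => mDigit x (k + 1)) (y := fun k => mIter x (k + 1))
      (z := fun k => s (k + 1)) (fun k => mIter_succ x (k + 1)) (fun _ => rfl)
      (fun k => Ioo_subset_Ico_self (mIter_mem_Ioo hx _)) (fun k => hs _ (by omega))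
  rw [mIter_succ, mIter_zero] at h1
  exact hx' (sub_right_injective (inv_injective h1)).symm

lemma minusOrbit_lt_one_of_le (hx : Irrational x) {m : ℕ} (hm : 1 ≤ m)
    (hlt : minusOrbit (mDigit x) x' m < 1) : ∀ n, m ≤ n → minusOrbit (mDigit x) x' n < 1 := by
  intro n hn
  induction n, hn using Nat.le_induction with
  | base => exact hlt
  | succ n hn ih =>
    have : (2 : ℝ) ≤ mDigit x n := by exact_mod_cast two_le_mDigit hx (by omega)
    exact inv_lt_one_of_one_lt₀ (by linarith)

lemma exists_lt_mIter_eq (hx : Irrational x) (hq : IsQuadratic x) :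
    ∃ m n, m < n ∧ mIter x m = mIter x n := by
  obtain ⟨a, b, c, ha, hroot⟩ := hq
  set f : IntQuad := ⟨a, b, c⟩
  have hf := IntQuad.hasRoots_of_eval_eq_zero (f := f) ha hroot
  obtain ⟨M, hM1, hM⟩ := exists_minusOrbit_lt_one hx (hf.ne ha hx).symm
  have hred := minusOrbit_lt_one_of_le hx hM1 hM
  set s := minusOrbit (mDigit x) (-f.b / f.a - x)
  set F := formSeq (mDigit x) f
  have hF : ∀ n, (F n).a ≠ 0 ∧ (F n).HasRoots (mIter x n) (s n) := hasRoots_formSeq hx ha hf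
  have hA : ∀ n, M ≤ n → 4 * |(F n).a| ≤ f.disc := fun n hn =>
    disc_formSeq (mDigit x) f n ▸
      (hF n).2.four_mul_abs_a_le_disc (hF n).1 (one_lt_mIter hx (by omega)) (hred n hn)
  set K := f.disc + f.disc ^ 2
  have hbox : ∀ k, ((F (M + k + 1)).a, (F (M + k + 1)).b, (F (M + k + 1)).c) ∈
      Icc (-K, -K, -K) (K, K, K) := fun k =>
    IntQuad.mem_Icc_of_four_mul_abs_le (disc_formSeq _ _ _) (hA _ (by omega))
      (hA (M + k) (by omega))
  obtain ⟨k, l, hkl, hFkl⟩ := (finite_Icc _ _).exists_lt_map_eq_of_forall_mem hbox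
  simp only [Prod.mk.injEq] at hFkl
  have hFeq : F (M + k + 1) = F (M + l + 1) := IntQuad.ext hFkl.1 hFkl.2.1 hFkl.2.2
  rcases (hF _).2.eq_or_eq (hFeq ▸ (hF (M + l + 1)).2) (hF _).1 with h | h
  · exact ⟨_, _, by omega, h.symm⟩
  · exact absurd h (ne_of_gt ((hred (M + k + 1) (by omega)).trans
      (one_lt_mIter hx (n := M + l + 1) (by omega))))

end Forward

section Backward

variable {x : ℝ}

lemma Rat.den_inv_ceil_sub_lt {q : ℚ} (hq : (⌈q⌉ : ℚ) ≠ q) : ((⌈q⌉ - q)⁻¹).den < q.den := by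
  have hpos : 0 < (⌈q⌉ : ℚ) - q := sub_pos.2 ((Int.le_ceil q).lt_of_ne' hq)
  have hlt : (⌈q⌉ : ℚ) - q < 1 := by linarith [Int.ceil_lt_add_one q]
  have hnum := Rat.num_lt_denom_iff.2 hlt
  have hnum_pos := Rat.num_pos.2 hpos
  rw [Rat.den_inv_of_ne_zero hpos.ne', ← Rat.intCast_sub_den ⌈q⌉ q]
  omega

lemma exists_mIter_ratCast_eq_intCast (q : ℚ) : ∃ n, ∃ k : ℤ, mIter q n = k := by
  induction h : q.den using Nat.strong_induction_on generalizing q with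
  | _ d ih =>
    by_cases hq : (⌈q⌉ : ℚ) = q
    · exact ⟨0, ⌈q⌉, by rw [mIter_zero]; exact_mod_cast hq.symm⟩
    · obtain ⟨n, k, hk⟩ := ih _ (h ▸ Rat.den_inv_ceil_sub_lt hq) ((⌈q⌉ - q)⁻¹) rfl
      refine ⟨1 + n, k, ?_⟩
      rw [mIter_add, mIter_succ, mIter_zero, mDigit, mIter_zero, Rat.ceil_cast, ← hk]
      push_cast
      rfl

lemma irrational_of_two_le_mDigit (h : ∀ i, 1 ≤ i → 2 ≤ mDigit x i) : Irrational x := by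
  rintro ⟨q, rfl⟩
  obtain ⟨n, k, hk⟩ := exists_mIter_ratCast_eq_intCast q
  have : mDigit q (n + 1) = 0 := by
    rw [mDigit, mIter_succ, mDigit, hk, Int.ceil_intCast, sub_self, inv_zero, Int.ceil_zero]
  have := h (n + 1) (by omega)
  omega

lemma eq_of_mDigit_eq {v w : ℝ} (hv : Irrational v) (hw : Irrational w)
    (hd : ∀ k, mDigit v k = mDigit w k) : v = w :=
  eq_of_forall_mem_Ico (b := mDigit v) (y := mIter v) (z := mIter w) (mIter_succ v)
    (fun k => hd k ▸ mIter_succ w k)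
    (fun k => Ioo_subset_Ico_self (mIter_mem_Ioo hv k))
    (fun k => hd k ▸ Ioo_subset_Ico_self (mIter_mem_Ioo hw k))

def minusRec {R : Type*} [CommRing R] (b : ℕ → ℤ) (u₀ u₁ : R) : ℕ → R
  | 0 => u₀
  | 1 => u₁
  | n + 2 => b n * minusRec b u₀ u₁ (n + 1) - minusRec b u₀ u₁ n

lemma minusRec_eq (b : ℕ → ℤ) (w : ℝ) (n : ℕ) :
    minusRec b w 1 n = (minusRec b 1 0 n : ℤ) * w + (minusRec b 0 1 n : ℤ) := by
  suffices ∀ n, minusRec b w 1 n = (minusRec b 1 0 n : ℤ) * w + (minusRec b 0 1 n : ℤ) ∧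
      minusRec b w 1 (n + 1) = (minusRec b 1 0 (n + 1) : ℤ) * w + (minusRec b 0 1 (n + 1) : ℤ)
    from (this n).1
  intro n
  induction n with
  | zero => simp [minusRec]
  | succ n ih =>
    refine ⟨ih.2, ?_⟩
    simp only [minusRec]
    rw [ih.1, ih.2]
    push_cast
    ring

lemma minusRec_one_zero_neg {b : ℕ → ℤ} (hb : ∀ n, 1 ≤ n → 2 ≤ b n) {n : ℕ} (hn : 2 ≤ n) :
    minusRec b (1 : ℤ) 0 n < 0 := by
  have key : ∀ n, minusRec b (1 : ℤ) 0 (n + 2) < minusRec b (1 : ℤ) 0 (n + 1) ∧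
      minusRec b (1 : ℤ) 0 (n + 1) ≤ 0 := by
    intro n
    induction n with
    | zero => simp [minusRec]
    | succ n ih =>
      have h2 := hb (n + 1) (by omega)
      have hrec : minusRec b (1 : ℤ) 0 (n + 3) =
          b (n + 1) * minusRec b (1 : ℤ) 0 (n + 2) - minusRec b (1 : ℤ) 0 (n + 1) := by
        simp only [minusRec, Int.cast_id]
      show minusRec b (1 : ℤ) 0 (n + 3) < minusRec b (1 : ℤ) 0 (n + 2) ∧
        minusRec b (1 : ℤ) 0 (n + 2) ≤ 0
      constructor <;> nlinarith
  obtain ⟨m, rfl⟩ := Nat.exists_eq_add_of_le' hn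
  exact (key m).1.trans_le (key m).2

/-- `minusRec (mDigit w) w 1 (n + 1) = ∏_{j < n} (mDigit w j - mIter w j)`. -/
lemma mIter_mul_minusRec (hw : Irrational w) (n : ℕ) :
    0 < minusRec (mDigit w) w 1 (n + 1) ∧
      mIter w n * minusRec (mDigit w) w 1 (n + 1) = minusRec (mDigit w) w 1 n := by
  induction n with
  | zero => simp [minusRec, mIter_zero]
  | succ n ih =>
    obtain ⟨hpos, hrel⟩ := ih
    have hb : 0 < (mDigit w n : ℝ) - mIter w n := sub_pos.2 (mIter_mem_Ioo hw n).2
    have hL : minusRec (mDigit w) w 1 (n + 2) =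
        ((mDigit w n : ℝ) - mIter w n) * minusRec (mDigit w) w 1 (n + 1) := by
      rw [minusRec, ← hrel]
      ring
    rw [hL, mIter_succ]
    exact ⟨mul_pos hb hpos, by field_simp⟩

lemma isQuadratic_of_mIter_eq_self {w : ℝ} (hw : Irrational w)
    (hdig : ∀ i, 1 ≤ i → 2 ≤ mDigit w i) {p : ℕ} (hp : 0 < p) (hper : mIter w p = w) :
    IsQuadratic w := by
  have key := (mIter_mul_minusRec hw p).2
  rw [hper, minusRec_eq, minusRec_eq] at key
  refine ⟨minusRec (mDigit w) 1 0 (p + 1),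
    minusRec (mDigit w) 0 1 (p + 1) - minusRec (mDigit w) 1 0 p, -minusRec (mDigit w) 0 1 p,
    (minusRec_one_zero_neg hdig (by omega)).ne, ?_⟩
  push_cast
  linear_combination key

lemma isQuadratic_of_isQuadratic_inv_sub {y : ℝ} (hy : Irrational y) (n : ℤ)
    (h : IsQuadratic ((n - y)⁻¹)) : IsQuadratic y := by
  obtain ⟨a, b, c, ha, hz⟩ := h
  have hny : (n : ℝ) - y ≠ 0 := sub_ne_zero.2 (hy.ne_int n).symm
  have hz' : (a : ℝ) + b * (n - y) + c * (n - y) ^ 2 = 0 := by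
    field_simp at hz
    linear_combination hz
  refine ⟨c, -b - 2 * c * n, a + b * n + c * n ^ 2, ?_, by push_cast; linear_combination hz'⟩
  rintro rfl
  have hirr : Irrational ((n - y)⁻¹) := (hy.intCast_sub n).inv
  refine ((hirr.intCast_mul ha).add_intCast b).ne_zero ?_
  field_simp at hz ⊢
  linear_combination hz

lemma isQuadratic_of_isQuadratic_mIter (hx : Irrational x) {n : ℕ}
    (h : IsQuadratic (mIter x n)) : IsQuadratic x := by
  induction n with
  | zero => exact h
  | succ n ih =>
    rw [mIter_succ] at h
    exact ih (isQuadratic_of_isQuadratic_inv_sub (irrational_mIter hx n) _ h)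

lemma isQuadratic_of_eventually_periodic (hx : Irrational x)
    (hdig : ∀ i, 1 ≤ i → 2 ≤ mDigit x i) {N p : ℕ} (hp : 0 < p)
    (hper : ∀ i, N ≤ i → mDigit x (i + p) = mDigit x i) : IsQuadratic x := by
  have hw := irrational_mIter hx N
  have hwp : mIter (mIter x N) p = mIter x N :=
    eq_of_mDigit_eq (irrational_mIter hw p) hw fun k => by
      rw [← mDigit_add, ← mDigit_add, ← mDigit_add, show N + (p + k) = N + k + p by omega]
      exact hper _ (by omega)
  refine isQuadratic_of_isQuadratic_mIter hx
    (isQuadratic_of_mIter_eq_self hw (fun i hi => ?_) hp hwp)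
  rw [← mDigit_add]
  exact hdig _ (by omega)

end Backward

theorem stmt_12 (x : ℝ) :
    (Irrational x ∧ ∃ a b c : ℤ, a ≠ 0 ∧
        (a : ℝ) * x ^ 2 + (b : ℝ) * x + (c : ℝ) = 0) ↔
      ((∀ i, 1 ≤ i → 2 ≤ mDigit x i) ∧
        ∃ N p : ℕ, 0 < p ∧ ∀ i, N ≤ i → mDigit x (i + p) = mDigit x i) := by
  constructor
  · rintro ⟨hx, hq⟩
    obtain ⟨m, n, hmn, hw⟩ := exists_lt_mIter_eq hx hq
    refine ⟨fun i hi => two_le_mDigit hx hi, m, n - m, by omega, ?_⟩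
    exact mDigit_periodic_of_mIter_eq (by rwa [Nat.add_sub_cancel' hmn.le])
  · rintro ⟨hdig, N, p, hp, hper⟩
    have hx := irrational_of_two_le_mDigit hdig
    exact ⟨hx, isQuadratic_of_eventually_periodic hx hdig hp hper⟩
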